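/- arXiv:2505.11524 — 4 statements merged into one kernel-verified Lean document; each statement's English description precedes it below -/
import Mathlib

section
/- Suppose the system is controllable (rank C_n = n) and observable (rank O_n = n). Then for all integers N ≥ n and H ≥ n, the block Hankel matrix of Markov parameters H ∈ ℝ^{pN×mH}, whose (i,j)-th p×m block equals C A^{i+j−2} B, has rank exactly n. -/
open Matrix

/-!
The Hankel matrix factors as `O_N * C_H`. Since `O_n` and `C_n` are submatrices of `O_N` and
`C_H`, controllability and observability make `O_N` injective and `C_H` of rank `n`, and
multiplying by an injective matrix on the left preserves rank.
-/

namespace Matrix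

variable {K : Type*} [Field K] {l m n : Type*} [Fintype l] [Fintype n]

theorem mulVecLin_injective_of_rank_eq_card_width (A : Matrix m n K)
    (hA : A.rank = Fintype.card n) : Function.Injective A.mulVecLin := by
  rw [← LinearMap.ker_eq_bot, ← Submodule.finrank_eq_zero]
  have h := LinearMap.finrank_range_add_finrank_ker A.mulVecLin
  rw [← rank, hA, Module.finrank_fintype_fun_eq_card] at h
  omega

theorem rank_mul_eq_right_of_rank_eq_card_width (A : Matrix m n K)
    (hA : A.rank = Fintype.card n) (B : Matrix n l K) : (A * B).rank = B.rank := by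
  rw [rank, rank, mulVecLin_mul, LinearMap.range_comp]
  exact (LinearEquiv.finrank_eq <| Submodule.equivMapOfInjective _
    (A.mulVecLin_injective_of_rank_eq_card_width hA) _).symm

end Matrix

section LTI

variable {K : Type*} [Field K] {m n p : Type*} [Fintype n] [DecidableEq n]

def extendedObservability (C : Matrix p n K) (A : Matrix n n K) (N : ℕ) :
    Matrix (Fin N × p) n K :=
  of fun ia c => (C * A ^ (ia.1 : ℕ)) ia.2 c

def extendedControllability (A : Matrix n n K) (B : Matrix n m K) (H : ℕ) :
    Matrix n (Fin H × m) K :=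
  of fun c jb => (A ^ (jb.1 : ℕ) * B) c jb.2

theorem extendedObservability_mul_extendedControllability_apply [Fintype m] [Fintype p]
    (C : Matrix p n K) (A : Matrix n n K) (B : Matrix n m K) {N H : ℕ}
    (i : Fin N) (a : p) (j : Fin H) (b : m) :
    (extendedObservability C A N * extendedControllability A B H) (i, a) (j, b) =
      (C * A ^ ((i : ℕ) + (j : ℕ)) * B) a b := by
  rw [pow_add, ← Matrix.mul_assoc, Matrix.mul_assoc (C * _)]
  rfl

theorem rank_extendedObservability_mono [Fintype p] (C : Matrix p n K) (A : Matrix n n K)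
    {N N' : ℕ} (h : N ≤ N') :
    (extendedObservability C A N).rank ≤ (extendedObservability C A N').rank :=
  rank_submatrix_le (extendedObservability C A N') (Prod.map (Fin.castLE h) id) id

theorem rank_extendedControllability_mono [Fintype m] (A : Matrix n n K) (B : Matrix n m K)
    {H H' : ℕ} (h : H ≤ H') :
    (extendedControllability A B H).rank ≤ (extendedControllability A B H').rank :=
  rank_submatrix_le (extendedControllability A B H') id (Prod.map (Fin.castLE h) id)

end LTI

/-- If the LTI system `(A, B, C)` is controllable (`rank C_n = n`) and observable
(`rank O_n = n`), then for all `N ≥ n` and `H ≥ n` the block Hankel matrix of Markov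
parameters, whose `(i,j)`-th `p × m` block (0-based `i,j`) is `C A^(i+j) B`, has rank
exactly `n`. -/
theorem hankel_markov_rank_eq_order
    {n m p : ℕ} (N H : ℕ) (hN : n ≤ N) (hH : n ≤ H)
    (A : Matrix (Fin n) (Fin n) ℝ) (B : Matrix (Fin n) (Fin m) ℝ)
    (C : Matrix (Fin p) (Fin n) ℝ)
    (ctrb : Matrix (Fin n) (Fin n × Fin m) ℝ)
    (hctrb : ∀ c : Fin n, ∀ i : Fin n, ∀ b : Fin m,
      ctrb c (i, b) = (A ^ (i : ℕ) * B) c b)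
    (obsv : Matrix (Fin n × Fin p) (Fin n) ℝ)
    (hobsv : ∀ i : Fin n, ∀ a : Fin p, ∀ c : Fin n,
      obsv (i, a) c = (C * A ^ (i : ℕ)) a c)
    (hcontrollable : ctrb.rank = n)
    (hobservable : obsv.rank = n)
    (Hankel : Matrix (Fin N × Fin p) (Fin H × Fin m) ℝ)
    (hHankel : ∀ i : Fin N, ∀ a : Fin p, ∀ j : Fin H, ∀ b : Fin m,
      Hankel (i, a) (j, b) = (C * A ^ ((i : ℕ) + (j : ℕ)) * B) a b) :
    Hankel.rank = n := by
  obtain rfl : ctrb = extendedControllability A B n := by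
    ext c ⟨i, b⟩
    exact hctrb c i b
  obtain rfl : obsv = extendedObservability C A n := by
    ext ⟨i, a⟩ c
    exact hobsv i a c
  have hHankel_eq : Hankel = extendedObservability C A N * extendedControllability A B H := by
    ext ⟨i, a⟩ ⟨j, b⟩
    rw [hHankel, extendedObservability_mul_extendedControllability_apply]
  have hO : (extendedObservability C A N).rank = n :=
    le_antisymm ((rank_le_card_width _).trans_eq (Fintype.card_fin n))
      (hobservable.ge.trans (rank_extendedObservability_mono C A hN))
  have hC : (extendedControllability A B H).rank = n :=
    le_antisymm ((rank_le_card_height _).trans_eq (Fintype.card_fin n))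
      (hcontrollable.ge.trans (rank_extendedControllability_mono A B hH))
  rw [hHankel_eq, rank_mul_eq_right_of_rank_eq_card_width _ (by simpa using hO), hC]
end

section
/- Let A_Y ∈ ℝ^{pN×n}, B_Y ∈ ℝ^{pN×mN}, C_u ∈ ℝ^{n×mN}, L ∈ ℝ^{n×pN}, A ∈ ℝ^{n×n} and suppose A^N = −L A_Y. Let matrices X_p, X_f ∈ ℝ^{n×H}, U_p, U_f ∈ ℝ^{mN×H}, Y_p, Y_f ∈ ℝ^{pN×H} satisfy Y_p = A_Y X_p + B_Y U_p, Y_f = A_Y X_f + B_Y U_f, and X_f = A^N X_p + C_u U_p. Then Y_f = P_1 U_p + P_2 Y_p + B_Y U_f, where P_1 = A_Y (L B_Y + C_u) and P_2 = −A_Y L. -/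
open Matrix

/-! Since `A ^ N = -(L * AY)` and `AY * Xp = Yp - BY * Up`, the unknown past state enters the
future state only through `A ^ N * Xp = L * (BY * Up - Yp)`, so `Xf` is a linear function of the
past data; substituting it into `Yf = AY * Xf + BY * Uf` gives the identity. -/

section StateElimination

variable {R : Type*} [Ring R] {n o q h : Type*} [Fintype n] [Fintype o] [Fintype q]
  [DecidableEq n] {N : ℕ}

theorem future_state_eq_of_pow_eq_neg_mul {A : Matrix n n R} {AY : Matrix o n R}
    {BY : Matrix o q R} {Cu : Matrix n q R} {L : Matrix n o R} (hL : A ^ N = -(L * AY))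
    {Xp Xf : Matrix n h R} {Up : Matrix q h R} {Yp : Matrix o h R}
    (hYp : Yp = AY * Xp + BY * Up) (hXf : Xf = A ^ N * Xp + Cu * Up) :
    Xf = (L * BY + Cu) * Up - L * Yp := by
  rw [hXf, hL, hYp]
  simp only [Matrix.add_mul, Matrix.mul_add, Matrix.neg_mul, Matrix.mul_assoc]
  abel

end StateElimination

/-- Central algebraic identity of subspace predictive control: if `A^N = −L A_Y`,
`Y_p = A_Y X_p + B_Y U_p`, `Y_f = A_Y X_f + B_Y U_f` and `X_f = A^N X_p + C_u U_p`,
then `Y_f = P_1 U_p + P_2 Y_p + B_Y U_f` with `P_1 = A_Y (L B_Y + C_u)` and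
`P_2 = −A_Y L`. -/
theorem spc_identity
    {n m p N H : ℕ}
    (A : Matrix (Fin n) (Fin n) ℝ)
    (AY : Matrix (Fin (p * N)) (Fin n) ℝ)
    (BY : Matrix (Fin (p * N)) (Fin (m * N)) ℝ)
    (Cu : Matrix (Fin n) (Fin (m * N)) ℝ)
    (L : Matrix (Fin n) (Fin (p * N)) ℝ)
    (hL : A ^ N = -(L * AY))
    (Xp Xf : Matrix (Fin n) (Fin H) ℝ)
    (Up Uf : Matrix (Fin (m * N)) (Fin H) ℝ)
    (Yp Yf : Matrix (Fin (p * N)) (Fin H) ℝ)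
    (hYp : Yp = AY * Xp + BY * Up)
    (hYf : Yf = AY * Xf + BY * Uf)
    (hXf : Xf = A ^ N * Xp + Cu * Up) :
    Yf = (AY * (L * BY + Cu)) * Up + (-(AY * L)) * Yp + BY * Uf := by
  rw [hYf, future_state_eq_of_pow_eq_neg_mul hL hYp hXf, Matrix.mul_sub, sub_eq_add_neg,
    Matrix.neg_mul, ← Matrix.mul_assoc, ← Matrix.mul_assoc]
end

section
/- Suppose the extended observability matrix O_N has full column rank n. Then there exist fixed matrices P_1 ∈ ℝ^{pN×mN} and P_2 ∈ ℝ^{pN×pN}, depending only on (A, B, C, N), such that for every trajectory (u_k, x_k, y_k) of the system and every time k ≥ N, the stacked future outputs Y_future = [y_{k+1}; …; y_{k+N}] satisfy Y_future = P_1 U_past + P_2 Y_past + B_Y U_future, where U_past = [u_{k−N}; …; u_{k−1}], Y_past = [y_{k−N+1}; …; y_k], and U_future = [u_k; …; u_{k+N−1}]. That is, the future outputs over a horizon of length N are a fixed linear function of the past N inputs, the past N outputs, and the future N inputs. -/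
/-!
Stacking the `N` outputs from time `t + 1` on gives `O_N (A x_t) + B_Y U_t`, with `U_t` the
inputs from time `t` on; this holds for the past window (`t = k - N`) and the future window
(`t = k`) alike. Full column rank makes `O_N` left invertible, say `L * O_N = 1`, so the past
window determines `A x_{k-N} = L (Y_past - B_Y U_past)`, and the state equation
`x_k = A^N x_{k-N} + [A^{N-1} B, …, A B, B] U_past` carries this to the future window.
-/

open Matrix Finset

theorem Matrix.exists_mul_eq_one_of_rank_eq_card {m n K : Type*} [Field K] [Fintype m]
    [Fintype n] [DecidableEq n] (M : Matrix m n K) (h : M.rank = Fintype.card n) :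
    ∃ L : Matrix n m K, L * M = 1 := by
  classical
  have hker : LinearMap.ker M.mulVecLin = ⊥ := by
    have := LinearMap.finrank_range_add_finrank_ker M.mulVecLin
    rw [← Matrix.rank, h, Module.finrank_fintype_fun_eq_card] at this
    exact Submodule.finrank_eq_zero.mp (by omega)
  obtain ⟨g, hg⟩ := M.mulVecLin.exists_leftInverse_of_injective hker
  refine ⟨LinearMap.toMatrix' g, Matrix.toLin'.injective ?_⟩
  rw [Matrix.toLin'_mul, Matrix.toLin'_toMatrix', Matrix.toLin'_one]
  exact hg

section LinearSystem

variable {R ι σ τ : Type*} [Semiring R] [Fintype ι] [DecidableEq ι]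

def window (w : ℕ → σ → R) (t N : ℕ) : Fin N × σ → R := fun jb => w (t + jb.1) jb.2

def observabilityMatrix (A : Matrix ι ι R) (C : Matrix τ ι R) (N : ℕ) :
    Matrix (Fin N × τ) ι R :=
  of fun ia c => (C * A ^ (ia.1 : ℕ)) ia.2 c

def markovToeplitz (A : Matrix ι ι R) (B : Matrix ι σ R) (C : Matrix τ ι R) (N : ℕ) :
    Matrix (Fin N × τ) (Fin N × σ) R :=
  of fun ia jb => if (jb.1 : ℕ) ≤ ia.1 then (C * A ^ ((ia.1 : ℕ) - jb.1) * B) ia.2 jb.2 else 0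

def reachabilityMatrix (A : Matrix ι ι R) (B : Matrix ι σ R) (N : ℕ) :
    Matrix ι (Fin N × σ) R :=
  of fun c jb => (A ^ (N - 1 - jb.1) * B) c jb.2

theorem observabilityMatrix_mulVec_apply (A : Matrix ι ι R) (C : Matrix τ ι R) {N : ℕ}
    (v : ι → R) (i : Fin N) (a : τ) :
    (observabilityMatrix A C N *ᵥ v) (i, a) = ((C * A ^ (i : ℕ)) *ᵥ v) a :=
  rfl

variable [Fintype σ]

theorem mulVec_window_apply {κ : Type*} {N : ℕ} (M : Matrix κ (Fin N × σ) R) (w : ℕ → σ → R)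
    (t : ℕ) (c : κ) :
    (M *ᵥ window w t N) c = ∑ j : Fin N, ∑ b, M c (j, b) * w (t + j) b :=
  Fintype.sum_prod_type _

theorem markovToeplitz_mulVec_window_apply (A : Matrix ι ι R) (B : Matrix ι σ R)
    (C : Matrix τ ι R) {N : ℕ} (w : ℕ → σ → R) (t : ℕ) (i : Fin N) (a : τ) :
    (markovToeplitz A B C N *ᵥ window w t N) (i, a) =
      ∑ j ∈ range (i + 1), ((C * A ^ ((i : ℕ) - j) * B) *ᵥ w (t + j)) a := by
  set f : ℕ → R := fun j => ((C * A ^ ((i : ℕ) - j) * B) *ᵥ w (t + j)) a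
  have hrow : ∀ j : Fin N, ∑ b, markovToeplitz A B C N (i, a) (j, b) * w (t + j) b =
      if (j : ℕ) ≤ i then f j else 0 := by
    intro j
    simp only [markovToeplitz, of_apply]
    split_ifs <;> simp [f, mulVec, dotProduct]
  have hrange : (range N).filter (· ≤ (i : ℕ)) = range (i + 1) := by
    ext j
    simp only [mem_filter, mem_range]
    omega
  rw [mulVec_window_apply, Fintype.sum_congr _ _ hrow,
    Fin.sum_univ_eq_sum_range (fun j => if j ≤ (i : ℕ) then f j else 0), ← sum_filter, hrange]

theorem reachabilityMatrix_mulVec_window (A : Matrix ι ι R) (B : Matrix ι σ R) (N : ℕ)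
    (w : ℕ → σ → R) (t : ℕ) :
    reachabilityMatrix A B N *ᵥ window w t N =
      ∑ j ∈ range N, (A ^ (N - 1 - j) * B) *ᵥ w (t + j) := by
  ext c
  rw [mulVec_window_apply, Finset.sum_apply, ← Fin.sum_univ_eq_sum_range]
  rfl

variable {A : Matrix ι ι R} {B : Matrix ι σ R} {C : Matrix τ ι R}
  {u : ℕ → σ → R} {x : ℕ → ι → R} {y : ℕ → τ → R}

theorem state_add_eq_pow_mulVec_add_sum (hx : ∀ k, x (k + 1) = A *ᵥ x k + B *ᵥ u k)
    (t i : ℕ) :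
    x (t + i) = A ^ i *ᵥ x t + ∑ j ∈ range i, (A ^ (i - 1 - j) * B) *ᵥ u (t + j) := by
  induction i with
  | zero => simp
  | succ i ih =>
    rw [← add_assoc, hx, ih, mulVec_add, mulVec_mulVec, ← pow_succ', mulVec_sum, sum_range_succ,
      add_assoc]
    congr 2
    · refine sum_congr rfl fun j hj => ?_
      rw [mulVec_mulVec, ← Matrix.mul_assoc, ← pow_succ']
      congr 3
      have := mem_range.mp hj
      omega
    · simp

theorem window_output_succ_eq (hx : ∀ k, x (k + 1) = A *ᵥ x k + B *ᵥ u k)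
    (hy : ∀ k, y k = C *ᵥ x k) (t N : ℕ) :
    window y (t + 1) N =
      observabilityMatrix A C N *ᵥ (A *ᵥ x t) + markovToeplitz A B C N *ᵥ window u t N := by
  ext ⟨i, a⟩
  rw [Pi.add_apply, observabilityMatrix_mulVec_apply, markovToeplitz_mulVec_window_apply,
    window, hy, add_assoc, add_comm 1, state_add_eq_pow_mulVec_add_sum hx t (i + 1)]
  simp only [pow_succ, add_tsub_cancel_right, mulVec_add, mulVec_mulVec, mulVec_sum,
    Pi.add_apply, Finset.sum_apply, Matrix.mul_assoc]

end LinearSystem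

/-- If the extended observability matrix `O_N` has full column rank `n`, then there exist
fixed matrices `P_1 ∈ ℝ^{pN×mN}` and `P_2 ∈ ℝ^{pN×pN}` (depending only on `(A,B,C,N)`)
such that for every trajectory of the system and every `k ≥ N`, the stacked future
outputs `[y_{k+1}; …; y_{k+N}]` equal `P_1 U_past + P_2 Y_past + B_Y U_future`, where
`U_past = [u_{k−N}; …; u_{k−1}]`, `Y_past = [y_{k−N+1}; …; y_k]`, and
`U_future = [u_k; …; u_{k+N−1}]`. -/
theorem spc_future_output_prediction
    {n m p : ℕ} (N : ℕ)
    (A : Matrix (Fin n) (Fin n) ℝ) (B : Matrix (Fin n) (Fin m) ℝ)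
    (C : Matrix (Fin p) (Fin n) ℝ)
    (ObsN : Matrix (Fin N × Fin p) (Fin n) ℝ)
    (hObsN : ∀ i : Fin N, ∀ a : Fin p, ∀ c : Fin n,
      ObsN (i, a) c = (C * A ^ (i : ℕ)) a c)
    (hrank : ObsN.rank = n)
    (BY : Matrix (Fin N × Fin p) (Fin N × Fin m) ℝ)
    (hBY : ∀ i : Fin N, ∀ a : Fin p, ∀ j : Fin N, ∀ b : Fin m,
      BY (i, a) (j, b) = if (j : ℕ) ≤ (i : ℕ) then (C * A ^ ((i : ℕ) - (j : ℕ)) * B) a b else 0) :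
    ∃ P1 : Matrix (Fin N × Fin p) (Fin N × Fin m) ℝ,
    ∃ P2 : Matrix (Fin N × Fin p) (Fin N × Fin p) ℝ,
      ∀ (u : ℕ → Fin m → ℝ) (x : ℕ → Fin n → ℝ) (y : ℕ → Fin p → ℝ),
        (∀ k, x (k + 1) = A.mulVec (x k) + B.mulVec (u k)) →
        (∀ k, y k = C.mulVec (x k)) →
        ∀ k : ℕ, N ≤ k →
          (fun ia : Fin N × Fin p => y (k + 1 + (ia.1 : ℕ)) ia.2) =
            P1.mulVec (fun jb : Fin N × Fin m => u (k - N + (jb.1 : ℕ)) jb.2) +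
            P2.mulVec (fun ia : Fin N × Fin p => y (k - N + 1 + (ia.1 : ℕ)) ia.2) +
            BY.mulVec (fun jb : Fin N × Fin m => u (k + (jb.1 : ℕ)) jb.2) := by
  obtain rfl : ObsN = observabilityMatrix A C N := by
    ext ⟨i, a⟩ c
    exact hObsN i a c
  obtain rfl : BY = markovToeplitz A B C N := by
    ext ⟨i, a⟩ ⟨j, b⟩
    exact hBY i a j b
  set O := observabilityMatrix A C N
  set T := markovToeplitz A B C N
  obtain ⟨L, hL⟩ := O.exists_mul_eq_one_of_rank_eq_card (by rw [hrank, Fintype.card_fin])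
  refine ⟨O * A * reachabilityMatrix A B N - O * A ^ N * L * T, O * A ^ N * L, ?_⟩
  intro u x y hx hy k hk
  obtain ⟨t, rfl⟩ : ∃ t, k = t + N := ⟨k - N, by omega⟩
  rw [Nat.add_sub_cancel]
  change window y (t + N + 1) N =
    _ *ᵥ window u t N + _ *ᵥ window y (t + 1) N + T *ᵥ window u (t + N) N
  have hstate : A *ᵥ x (t + N) =
      A ^ N *ᵥ (A *ᵥ x t) + (A * reachabilityMatrix A B N) *ᵥ window u t N := by
    rw [state_add_eq_pow_mulVec_add_sum hx, ← reachabilityMatrix_mulVec_window, mulVec_add,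
      mulVec_mulVec, mulVec_mulVec, mulVec_mulVec, pow_mul_comm']
  have hpast : A *ᵥ x t = L *ᵥ (window y (t + 1) N - T *ᵥ window u t N) := by
    rw [window_output_succ_eq hx hy, add_sub_cancel_right, mulVec_mulVec, hL, one_mulVec]
  rw [window_output_succ_eq hx hy, hstate, hpast]
  simp only [mulVec_add, mulVec_sub, sub_mulVec, mulVec_mulVec, Matrix.mul_assoc]
  abel
end

section
/- (Fundamental lemma.) Suppose the system is controllable (rank C_n = n) and observable (rank O_n = n). Let (u_k, x_k, y_k), k = 0, …, 2N+H−2 (with y defined up to index 2N+H−1), be a trajectory of the system, and suppose the input sequence u_0, …, u_{2N+H−2} is persistently exciting of order 2N+n, i.e., the block Hankel matrix H_{(2N+n, H', u_0)} with H' = (2N+H−1) − (2N+n) + 1 columns has full row rank m(2N+n). Define U_p = H_{(N,H,u_0)}, Y_p = H_{(N,H,y_1)}, U_f = H_{(N,H,u_N)}, Y_f = H_{(N,H,y_{N+1})}. Then for every trajectory (ū_k, x̄_k, ȳ_k), k = 0, …, 2N−1 (with ȳ defined up to index 2N), of the same system, there exists v ∈ ℝ^H such that U_p v = [ū_0; …;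 ū_{N−1}], Y_p v = [ȳ_1; …; ȳ_N], U_f v = [ū_N; …; ū_{2N−1}], and Y_f v = [ȳ_{N+1}; …; ȳ_{2N}]. -/
/-!
The combination `v ↦ ∑ⱼ vⱼ (u, x, y)(· + j)` of shifted data is again a trajectory, and a
trajectory is determined on `[0, 2N]` by its initial state and its inputs. So it suffices that
the stacked matrix `[H_{2N}(u); x_0 … x_{H-1}]` has full row rank (Willems' lemma). Let
`(η, ξ)` annihilate it. Eliminating the states over `k ≤ n` shifts and combining the resulting
relations with the coefficients of the characteristic polynomial of `A` (Cayley–Hamilton)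
yields an annihilator of the depth-`(2N + n)` input Hankel matrix, which vanishes by
persistency of excitation. Because the characteristic polynomial is monic, this is a backward
recurrence for the sequence `ξA^{n-1}B, …, ξB, η_0, η_1, …`, which is finitely supported and
hence zero; controllability then forces `ξ = 0`.
-/

open Matrix

open Finset

section Trajectory

variable {R : Type*} [CommRing R] {σ ι κ : Type*}

def hankel (w : ℕ → ι → R) (L H : ℕ) : Matrix (Fin L × ι) (Fin H) R :=
  of fun r j => w (r.1 + j) r.2

def stateMatrix (x : ℕ → σ → R) (H : ℕ) : Matrix σ (Fin H) R :=
  of fun e j => x j e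

def shiftComb {α : Type*} {H : ℕ} (v : Fin H → R) (w : ℕ → α → R) (t : ℕ) : α → R :=
  ∑ j, v j • w (t + j)

def ctrbMatrix {n : ℕ} (A : Matrix (Fin n) (Fin n) R) (B : Matrix (Fin n) ι R) :
    Matrix (Fin n) (Fin n × ι) R :=
  of fun c q => (A ^ (q.1 : ℕ) * B) c q.2

variable {H : ℕ} (v : Fin H → R)

lemma mulVec_eq_shiftComb {N : ℕ} {α : Type*} {M : Matrix (Fin N × α) (Fin H) R}
    {w : ℕ → α → R} (s : ℕ) (hM : ∀ i a j, M (i, a) j = w (s + i + j) a) :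
    M *ᵥ v = fun r => shiftComb v w (s + r.1) r.2 := by
  ext ⟨i, a⟩
  simp [mulVec, dotProduct, shiftComb, hM, add_assoc, mul_comm]

lemma hankel_mulVec (w : ℕ → ι → R) (L : ℕ) :
    hankel w L H *ᵥ v = fun r => shiftComb v w r.1 r.2 := by
  simpa using mulVec_eq_shiftComb v 0 (M := hankel w L H) (fun i a j => by simp [hankel])

lemma stateMatrix_mulVec (x : ℕ → σ → R) : stateMatrix x H *ᵥ v = shiftComb v x 0 := by
  ext e
  simp [mulVec, dotProduct, shiftComb, stateMatrix, mul_comm]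

variable [Fintype σ] [Fintype ι] {A : Matrix σ σ R} {B : Matrix σ ι R} {u : ℕ → ι → R}
  {x : ℕ → σ → R}

lemma shiftComb_succ (hx : ∀ k, x (k + 1) = A *ᵥ x k + B *ᵥ u k) (t : ℕ) :
    shiftComb v x (t + 1) = A *ᵥ shiftComb v x t + B *ᵥ shiftComb v u t := by
  simp only [shiftComb, mulVec_sum, mulVec_smul, ← sum_add_distrib, ← smul_add, ← hx,
    add_right_comm]

lemma shiftComb_output {C : Matrix κ σ R} {y : ℕ → κ → R} (hy : ∀ k, y k = C *ᵥ x k) (t : ℕ) :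
    shiftComb v y t = C *ᵥ shiftComb v x t := by
  simp only [shiftComb, mulVec_sum, mulVec_smul, ← hy]

lemma state_eq_of_input_eq {u' : ℕ → ι → R} {x' : ℕ → σ → R}
    (hx : ∀ k, x (k + 1) = A *ᵥ x k + B *ᵥ u k) (hx' : ∀ k, x' (k + 1) = A *ᵥ x' k + B *ᵥ u' k)
    (h0 : x 0 = x' 0) {T : ℕ} (hu : ∀ t < T, u t = u' t) : ∀ t ≤ T, x t = x' t
  | 0, _ => h0
  | t + 1, ht => by
    rw [hx, hx', state_eq_of_input_eq hx hx' h0 hu t (by omega), hu t (by omega)]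

lemma state_add [DecidableEq σ] (hx : ∀ k, x (k + 1) = A *ᵥ x k + B *ᵥ u k) (j k : ℕ) :
    x (j + k) = A ^ k *ᵥ x j + ∑ i ∈ range k, (A ^ (k - 1 - i) * B) *ᵥ u (j + i) := by
  induction k generalizing j with
  | zero => simp
  | succ k ih =>
    rw [← add_assoc, add_right_comm, ih (j + 1), hx, sum_range_succ', mulVec_add, mulVec_mulVec,
      ← pow_succ, mulVec_mulVec, add_assoc, add_comm (_ *ᵥ u j)]
    congr 2
    exact sum_congr rfl fun i _ => by
      rw [show k + 1 - 1 - (i + 1) = k - 1 - i by omega, add_right_comm, add_assoc]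

end Trajectory

lemma Matrix.sum_charpoly_coeff_smul_pow {R σ : Type*} [CommRing R] [Nontrivial R] [Fintype σ]
    [DecidableEq σ] (A : Matrix σ σ R) :
    ∑ k ∈ range (Fintype.card σ + 1), A.charpoly.coeff k • A ^ k = 0 := by
  simpa [Polynomial.aeval_eq_sum_range, charpoly_natDegree_eq_dim] using A.aeval_self_charpoly

lemma eq_zero_of_monic_recurrence {R V : Type*} [Ring R] [AddCommGroup V] [Module R V]
    {a : ℕ → R} {n L : ℕ} (ha : a n = 1) {s : ℕ → V} (hs : ∀ i, L ≤ i → s i = 0)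
    (hrec : ∀ i < L, ∑ k ∈ range (n + 1), a k • s (i + n - k) = 0) (i : ℕ) : s i = 0 := by
  suffices h : ∀ d i, L ≤ i + d → s i = 0 from h L i (by omega)
  intro d
  induction d with
  | zero => exact hs
  | succ d ih =>
    intro i hi
    by_cases hid : L ≤ i + d
    · exact ih i hid
    have h := hrec i (by omega)
    rwa [sum_range_succ, ha, one_smul, add_tsub_cancel_right,
      sum_eq_zero fun k hk => by rw [ih _ (by simp at hk; omega), smul_zero], zero_add] at h

section FullRowRank

variable {K : Type*} [Field K] {m n : Type*} [Fintype m] [Fintype n]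

lemma Matrix.linearIndependent_row_of_rank_eq_card {M : Matrix m n K}
    (h : M.rank = Fintype.card m) : LinearIndependent K M.row := by
  rw [linearIndependent_iff_card_eq_finrank_span, ← h, rank_eq_finrank_span_row]
  rfl

lemma Matrix.mulVec_surjective_of_linearIndependent_row {M : Matrix m n K}
    (h : LinearIndependent K M.row) : Function.Surjective M.mulVec := by
  have : LinearMap.range M.mulVecLin = ⊤ := Submodule.eq_top_of_finrank_eq (by
    rw [← rank, h.rank_matrix, Module.finrank_fintype_fun_eq_card])
  exact LinearMap.range_eq_top.mp this

end FullRowRank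

section Willems

variable {K : Type*} [Field K] {ι : Type*} [Fintype ι] {n L H : ℕ}
  {A : Matrix (Fin n) (Fin n) K} {B : Matrix (Fin n) ι K} {u : ℕ → ι → K} {x : ℕ → Fin n → K}

lemma vecMul_hankel (c : ℕ → ι → K) :
    (fun r : Fin L × ι => c r.1 r.2) ᵥ* hankel u L H =
      fun j : Fin H => ∑ i ∈ range L, c i ⬝ᵥ u (i + j) := by
  ext j
  simp only [vecMul, dotProduct, hankel, of_apply, Fintype.sum_prod_type]
  exact Fin.sum_univ_eq_sum_range (fun i => ∑ b, c i b * u (i + j) b) L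

lemma vecMul_stateMatrix (ξ : Fin n → K) : ξ ᵥ* stateMatrix x H = fun j : Fin H => ξ ⬝ᵥ x j := by
  ext j
  simp [vecMul, dotProduct, stateMatrix]

lemma eq_zero_of_sum_dotProduct_hankel_eq_zero
    (hPE : (hankel u L H).rank = Fintype.card (Fin L × ι)) {c : ℕ → ι → K}
    (hc : ∀ j < H, ∑ i ∈ range L, c i ⬝ᵥ u (i + j) = 0) : ∀ i < L, c i = 0 := by
  have hc' : (fun r : Fin L × ι => c r.1 r.2) = 0 :=
    vecMul_injective_iff.mpr (linearIndependent_row_of_rank_eq_card hPE) (by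
      dsimp only
      rw [vecMul_hankel, zero_vecMul]
      exact funext fun j => hc j j.isLt)
  exact fun i hi => funext fun b => congrFun hc' (⟨i, hi⟩, b)

lemma eq_zero_of_vecMul_pow_mul_eq_zero (hctrl : (ctrbMatrix A B).rank = n) {ξ : Fin n → K}
    (hξ : ∀ d < n, ξ ᵥ* (A ^ d * B) = 0) : ξ = 0 := by
  apply vecMul_injective_iff.mpr (linearIndependent_row_of_rank_eq_card (M := ctrbMatrix A B)
    (by simpa using hctrl))
  ext ⟨d, b⟩
  simpa [ctrbMatrix, vecMul, dotProduct] using congrFun (hξ d d.isLt) b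

/-- Eliminating the state from `ξ ⬝ᵥ x (j + n) + ∑ᵢ η i ⬝ᵥ u (i + j + n)` by `state_add` leaves
these coefficients on the inputs `u j, u (j + 1), …`. -/
def inputAnnihilator (A : Matrix (Fin n) (Fin n) K) (B : Matrix (Fin n) ι K) (ξ : Fin n → K)
    (η : ℕ → ι → K) (i : ℕ) : ι → K :=
  if i < n then ξ ᵥ* (A ^ (n - 1 - i) * B) else η (i - n)

section Annihilator

variable (hx : ∀ k, x (k + 1) = A *ᵥ x k + B *ᵥ u k) {ξ : Fin n → K} {η : ℕ → ι → K}
  (hη : ∀ i, L ≤ i → η i = 0)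
  (hker : ∀ j < H, ξ ⬝ᵥ x j + ∑ i ∈ range L, η i ⬝ᵥ u (i + j) = 0)
include hx hη hker

lemma inputAnnihilator_shift {k j : ℕ} (hk : k ≤ n) (hj : j + k < H) :
    (ξ ᵥ* A ^ k) ⬝ᵥ x j + ∑ i ∈ range (L + n), inputAnnihilator A B ξ η (i + n - k) ⬝ᵥ u (i + j)
      = 0 := by
  have h := hker (j + k) hj
  rw [state_add hx, dotProduct_add, dotProduct_mulVec, dotProduct_sum] at h
  rw [← h, show L + n = k + (L + n - k) by omega, sum_range_add, ← add_assoc]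
  congr 1
  · congr 1
    refine sum_congr rfl fun i hi => ?_
    have hi : i < k := mem_range.mp hi
    rw [inputAnnihilator, if_pos (by omega), dotProduct_mulVec, add_comm j i,
      show n - 1 - (i + n - k) = k - 1 - i by omega]
  · calc _ = ∑ i ∈ range (L + n - k), η i ⬝ᵥ u (i + (j + k)) := sum_congr rfl fun i _ => by
          rw [inputAnnihilator, if_neg (by omega), show k + i + n - k - n = i by omega,
            show k + i + j = i + (j + k) by omega]
      _ = _ := (sum_subset (range_subset_range.2 (by omega)) fun i _ hi => by
          rw [hη i (by simpa using hi), zero_dotProduct]).symm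

lemma charpoly_smul_inputAnnihilator_annihilates {j : ℕ} (hj : j + n < H) :
    ∑ i ∈ range (L + n), (∑ k ∈ range (n + 1),
      A.charpoly.coeff k • inputAnnihilator A B ξ η (i + n - k)) ⬝ᵥ u (i + j) = 0 := by
  calc _ = ∑ k ∈ range (n + 1), A.charpoly.coeff k *
        ∑ i ∈ range (L + n), inputAnnihilator A B ξ η (i + n - k) ⬝ᵥ u (i + j) := by
        simp only [sum_dotProduct, smul_dotProduct, smul_eq_mul, mul_sum]
        exact sum_comm
    _ = -((ξ ᵥ* ∑ k ∈ range (n + 1), A.charpoly.coeff k • A ^ k) ⬝ᵥ x j) := by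
        rw [vecMul_sum, sum_dotProduct, ← sum_neg_distrib]
        refine sum_congr rfl fun k hk => ?_
        have hk : k ≤ n := Nat.lt_succ_iff.mp (mem_range.mp hk)
        rw [eq_neg_of_add_eq_zero_right (inputAnnihilator_shift hx hη hker hk (by omega)),
          vecMul_smul, smul_dotProduct, smul_eq_mul, mul_neg]
    _ = 0 := by simpa using congrArg (fun M => -((ξ ᵥ* M) ⬝ᵥ x j)) A.sum_charpoly_coeff_smul_pow

theorem annihilator_eq_zero (hctrl : (ctrbMatrix A B).rank = n)
    (hPE : (hankel u (L + n) (H - n)).rank = Fintype.card (Fin (L + n) × ι)) :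
    ξ = 0 ∧ ∀ i, η i = 0 := by
  have hrec := eq_zero_of_sum_dotProduct_hankel_eq_zero hPE fun j hj =>
    charpoly_smul_inputAnnihilator_annihilates hx hη hker (by omega)
  have hext : ∀ i, inputAnnihilator A B ξ η i = 0 := by
    refine eq_zero_of_monic_recurrence (by simpa using (charpoly_monic A).coeff_natDegree)
      (fun i hi => ?_) hrec
    rw [inputAnnihilator, if_neg (by omega), hη _ (by omega)]
  refine ⟨eq_zero_of_vecMul_pow_mul_eq_zero hctrl fun d hd => ?_, fun i => ?_⟩
  · simpa [inputAnnihilator, show n - 1 - d < n by omega, show n - 1 - (n - 1 - d) = d by omega]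
      using hext (n - 1 - d)
  · simpa [inputAnnihilator] using hext (i + n)

end Annihilator

theorem linearIndependent_row_fromRows_hankel_stateMatrix
    (hx : ∀ k, x (k + 1) = A *ᵥ x k + B *ᵥ u k) (hctrl : (ctrbMatrix A B).rank = n)
    (hPE : (hankel u (L + n) (H - n)).rank = Fintype.card (Fin (L + n) × ι)) :
    LinearIndependent K (fromRows (hankel u L H) (stateMatrix x H)).row := by
  rw [← vecMul_injective_iff, ← coe_vecMulLinear, ← LinearMap.ker_eq_bot, LinearMap.ker_eq_bot']
  intro w hw
  set η : ℕ → ι → K := fun i b => if h : i < L then w (.inl (⟨i, h⟩, b)) else 0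
  have hwη : w ∘ Sum.inl = fun r : Fin L × ι => η r.1 r.2 := by
    ext ⟨i, b⟩
    simp [η]
  rw [vecMulLinear_apply, vecMul_fromRows, hwη, vecMul_hankel, vecMul_stateMatrix] at hw
  obtain ⟨hξ, hη⟩ := annihilator_eq_zero hx (ξ := w ∘ Sum.inr) (η := η)
    (fun i hi => funext fun b => dif_neg (by omega))
    (fun j hj => by simpa [add_comm] using congrFun hw ⟨j, hj⟩) hctrl hPE
  ext (⟨i, b⟩ | e)
  · simpa [η] using congrFun (hη i) b
  · exact congrFun hξ e

end Willems

theorem fundamental_lemma_general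
    {n m p : ℕ} (N H : ℕ)
    (A : Matrix (Fin n) (Fin n) ℝ) (B : Matrix (Fin n) (Fin m) ℝ)
    (C : Matrix (Fin p) (Fin n) ℝ)
    -- controllability and observability
    (ctrb : Matrix (Fin n) (Fin n × Fin m) ℝ)
    (hctrb : ∀ c : Fin n, ∀ i : Fin n, ∀ b : Fin m, ctrb c (i, b) = (A ^ (i : ℕ) * B) c b)
    (hcontrollable : ctrb.rank = n)
    -- the data-generating trajectory
    (u : ℕ → Fin m → ℝ) (x : ℕ → Fin n → ℝ) (y : ℕ → Fin p → ℝ)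
    (hstate : ∀ k, x (k + 1) = A.mulVec (x k) + B.mulVec (u k))
    (hout : ∀ k, y k = C.mulVec (x k))
    -- persistency of excitation of order 2N + n
    (PE : Matrix (Fin (2 * N + n) × Fin m) (Fin (H - n)) ℝ)
    (hPE : ∀ i : Fin (2 * N + n), ∀ b : Fin m, ∀ j : Fin (H - n),
      PE (i, b) j = u ((i : ℕ) + (j : ℕ)) b)
    (hPErank : PE.rank = m * (2 * N + n))
    -- the data Hankel matrices
    (Up : Matrix (Fin N × Fin m) (Fin H) ℝ)
    (hUp : ∀ i : Fin N, ∀ b : Fin m, ∀ j : Fin H, Up (i, b) j = u ((i : ℕ) + (j : ℕ)) b)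
    (Yp : Matrix (Fin N × Fin p) (Fin H) ℝ)
    (hYp : ∀ i : Fin N, ∀ a : Fin p, ∀ j : Fin H, Yp (i, a) j = y (1 + (i : ℕ) + (j : ℕ)) a)
    (Uf : Matrix (Fin N × Fin m) (Fin H) ℝ)
    (hUf : ∀ i : Fin N, ∀ b : Fin m, ∀ j : Fin H, Uf (i, b) j = u (N + (i : ℕ) + (j : ℕ)) b)
    (Yf : Matrix (Fin N × Fin p) (Fin H) ℝ)
    (hYf : ∀ i : Fin N, ∀ a : Fin p, ∀ j : Fin H,
      Yf (i, a) j = y (N + 1 + (i : ℕ) + (j : ℕ)) a) :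
    -- every trajectory of the same system is in the column span of the data
    ∀ (ub : ℕ → Fin m → ℝ) (xb : ℕ → Fin n → ℝ) (yb : ℕ → Fin p → ℝ),
      (∀ k, xb (k + 1) = A.mulVec (xb k) + B.mulVec (ub k)) →
      (∀ k, yb k = C.mulVec (xb k)) →
      ∃ v : Fin H → ℝ,
        Up.mulVec v = (fun ib : Fin N × Fin m => ub (ib.1 : ℕ) ib.2) ∧
        Yp.mulVec v = (fun ia : Fin N × Fin p => yb (1 + (ia.1 : ℕ)) ia.2) ∧
        Uf.mulVec v = (fun ib : Fin N × Fin m => ub (N + (ib.1 : ℕ)) ib.2) ∧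
        Yf.mulVec v = (fun ia : Fin N × Fin p => yb (N + 1 + (ia.1 : ℕ)) ia.2) := by
  intro ub xb yb hxb hyb
  have hctrb' : ctrb = ctrbMatrix A B := by ext c ⟨i, b⟩; exact hctrb c i b
  have hPE' : PE = hankel u (2 * N + n) (H - n) := by ext ⟨i, b⟩ j; exact hPE i b j
  obtain ⟨v, hv⟩ := mulVec_surjective_of_linearIndependent_row
    (linearIndependent_row_fromRows_hankel_stateMatrix hstate (hctrb' ▸ hcontrollable)
      (by rw [← hPE', hPErank, Fintype.card_prod, Fintype.card_fin, Fintype.card_fin, mul_comm]))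
    (Sum.elim (fun r => ub r.1 r.2) (xb 0))
  rw [fromRows_mulVec, hankel_mulVec, stateMatrix_mulVec] at hv
  have hu (t : ℕ) (ht : t < 2 * N) : shiftComb v u t = ub t :=
    funext fun b => congrFun hv (.inl (⟨t, ht⟩, b))
  have hx : ∀ t ≤ 2 * N, shiftComb v x t = xb t :=
    state_eq_of_input_eq (shiftComb_succ v hstate) hxb (funext fun e => congrFun hv (.inr e)) hu
  have hy (t : ℕ) (ht : t ≤ 2 * N) : shiftComb v y t = yb t := by
    rw [shiftComb_output v hout, hx t ht, hyb]
  refine ⟨v, ?_, ?_, ?_, ?_⟩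
  · rw [mulVec_eq_shiftComb v 0 (by simpa using hUp)]; ext ⟨i, b⟩; simp [hu i (by omega)]
  · rw [mulVec_eq_shiftComb v 1 hYp]; ext ⟨i, a⟩; rw [hy _ (by omega)]
  · rw [mulVec_eq_shiftComb v N hUf]; ext ⟨i, b⟩; rw [hu _ (by omega)]
  · rw [mulVec_eq_shiftComb v (N + 1) hYf]; ext ⟨i, a⟩; rw [hy _ (by omega)]

/-- Fundamental lemma: for a controllable and observable LTI system, if the input data is
persistently exciting of order `2N + n`, then every length-`2N` input/output trajectory of
the system is a linear combination of the columns of the stacked data Hankel matrices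
`U_p, Y_p, U_f, Y_f`. -/
theorem fundamental_lemma
    {n m p : ℕ} (N H : ℕ)
    (A : Matrix (Fin n) (Fin n) ℝ) (B : Matrix (Fin n) (Fin m) ℝ)
    (C : Matrix (Fin p) (Fin n) ℝ)
    -- controllability and observability
    (ctrb : Matrix (Fin n) (Fin n × Fin m) ℝ)
    (hctrb : ∀ c : Fin n, ∀ i : Fin n, ∀ b : Fin m, ctrb c (i, b) = (A ^ (i : ℕ) * B) c b)
    (obsv : Matrix (Fin n × Fin p) (Fin n) ℝ)
    (hobsv : ∀ i : Fin n, ∀ a : Fin p, ∀ c : Fin n, obsv (i, a) c = (C * A ^ (i : ℕ)) a c)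
    (hcontrollable : ctrb.rank = n)
    (hobservable : obsv.rank = n)
    -- the data-generating trajectory
    (u : ℕ → Fin m → ℝ) (x : ℕ → Fin n → ℝ) (y : ℕ → Fin p → ℝ)
    (hstate : ∀ k, x (k + 1) = A.mulVec (x k) + B.mulVec (u k))
    (hout : ∀ k, y k = C.mulVec (x k))
    -- persistency of excitation of order 2N + n
    (PE : Matrix (Fin (2 * N + n) × Fin m) (Fin (H - n)) ℝ)
    (hPE : ∀ i : Fin (2 * N + n), ∀ b : Fin m, ∀ j : Fin (H - n),
      PE (i, b) j = u ((i : ℕ) + (j : ℕ)) b)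
    (hPErank : PE.rank = m * (2 * N + n))
    -- the data Hankel matrices
    (Up : Matrix (Fin N × Fin m) (Fin H) ℝ)
    (hUp : ∀ i : Fin N, ∀ b : Fin m, ∀ j : Fin H, Up (i, b) j = u ((i : ℕ) + (j : ℕ)) b)
    (Yp : Matrix (Fin N × Fin p) (Fin H) ℝ)
    (hYp : ∀ i : Fin N, ∀ a : Fin p, ∀ j : Fin H, Yp (i, a) j = y (1 + (i : ℕ) + (j : ℕ)) a)
    (Uf : Matrix (Fin N × Fin m) (Fin H) ℝ)
    (hUf : ∀ i : Fin N, ∀ b : Fin m, ∀ j : Fin H, Uf (i, b) j = u (N + (i : ℕ) + (j : ℕ)) b)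
    (Yf : Matrix (Fin N × Fin p) (Fin H) ℝ)
    (hYf : ∀ i : Fin N, ∀ a : Fin p, ∀ j : Fin H,
      Yf (i, a) j = y (N + 1 + (i : ℕ) + (j : ℕ)) a) :
    -- every trajectory of the same system is in the column span of the data
    ∀ (ub : ℕ → Fin m → ℝ) (xb : ℕ → Fin n → ℝ) (yb : ℕ → Fin p → ℝ),
      (∀ k, xb (k + 1) = A.mulVec (xb k) + B.mulVec (ub k)) →
      (∀ k, yb k = C.mulVec (xb k)) →
      ∃ v : Fin H → ℝ,
        Up.mulVec v = (fun ib : Fin N × Fin m => ub (ib.1 : ℕ) ib.2) ∧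
        Yp.mulVec v = (fun ia : Fin N × Fin p => yb (1 + (ia.1 : ℕ)) ia.2) ∧
        Uf.mulVec v = (fun ib : Fin N × Fin m => ub (N + (ib.1 : ℕ)) ib.2) ∧
        Yf.mulVec v = (fun ia : Fin N × Fin p => yb (N + 1 + (ia.1 : ℕ)) ia.2) :=
  fundamental_lemma_general N H A B C ctrb hctrb hcontrollable u x y hstate hout PE hPE hPErank Up
    hUp Yp hYp Uf hUf Yf hYf
end
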